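/- arXiv:2411.16283 — 2 statements merged into one kernel-verified Lean document; each statement's English description precedes it below -/
import Mathlib

section
/- Let a, b be positive integers with ab ≥ 4 and define g'_m = (α'_m, β'_m) by g'_1 = (b, -1), g'_2 = (ab-1, -a), g'_{m+2} = -g'_m + b·g'_{m+1} for m odd, g'_{m+2} = -g'_m + a·g'_{m+1} for m even. Then the slopes β'_m/α'_m converge to -(ab - √(ab(ab-4)))/(2b) = -2a/(ab + √(ab(ab-4))) as m → ∞. -/
/-!
With `c = a b - 2` and the Lucas sequence `U_0 = 0, U_1 = 1, U_{k+2} = c U_{k+1} - U_k`,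
induction gives `g'_{2k+1} = (b U_{k+1}, -(U_{k+1} + U_k))` and
`g'_{2k+2} = ((a b - 1) U_{k+1} - U_k, -a U_{k+1})`, so along odd and along even indices the
slope is a continuous function of `U_k / U_{k+1}`. The ratios `ρ_k = U_{k+2} / U_{k+1}` satisfy
`ρ_{k+1} = c - ρ_k⁻¹`; as `x + x⁻¹` is increasing on `[1, ∞)`, they decrease to the larger root
`λ` of `x² - c x + 1`. Hence `U_k / U_{k+1} → λ⁻¹`, and both subsequences of slopes tend to
`-(1 + λ⁻¹) / b`, using `(1 + λ)(1 + λ⁻¹) = a b` for the even one.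
-/

open Filter Topology

lemma strictMonoOn_add_inv : StrictMonoOn (fun x : ℝ => x + x⁻¹) (Set.Ici 1) := by
  intro l (hl : 1 ≤ l) x (hx : 1 ≤ x) hlx
  have hprod : 1 < x * l := by nlinarith
  have key : x + x⁻¹ - (l + l⁻¹) = (x - l) * (x * l - 1) / (x * l) := by
    field_simp
    ring
  rw [← sub_pos, key]
  exact div_pos (mul_pos (sub_pos.2 hlx) (sub_pos.2 hprod)) (by positivity)

theorem tendsto_of_succ_eq_sub_inv {c l : ℝ} (hl : 1 ≤ l) (hlc : l + l⁻¹ = c) {ρ : ℕ → ℝ}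
    (hρ : ∀ k, ρ (k + 1) = c - (ρ k)⁻¹) (h0 : l ≤ ρ 0) : Tendsto ρ atTop (𝓝 l) := by
  have hl0 : 0 < l := by linarith
  have hge : ∀ k, l ≤ ρ k := by
    intro k
    induction k with
    | zero => exact h0
    | succ k ih =>
      have := inv_anti₀ hl0 ih
      rw [hρ]
      linarith
  have hanti : Antitone ρ := by
    refine antitone_nat_of_succ_le fun k => ?_
    have := strictMonoOn_add_inv.monotoneOn (Set.mem_Ici.2 hl)
      (Set.mem_Ici.2 (hl.trans (hge k))) (hge k)
    rw [hρ]
    linarith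
  set L := ⨅ k, ρ k
  have hlim : Tendsto ρ atTop (𝓝 L) :=
    tendsto_atTop_ciInf hanti ⟨l, Set.forall_mem_range.2 hge⟩
  have hlL : l ≤ L := le_ciInf hge
  have hfix : L = c - L⁻¹ := by
    refine tendsto_nhds_unique ((tendsto_add_atTop_iff_nat 1).2 hlim) ?_
    simp_rw [hρ]
    exact (hlim.inv₀ (by linarith)).const_sub c
  have hL : L = l :=
    strictMonoOn_add_inv.injOn (Set.mem_Ici.2 (hl.trans hlL)) (Set.mem_Ici.2 hl)
      (show L + L⁻¹ = l + l⁻¹ by linarith)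
  rwa [hL] at hlim

lemma tendsto_of_tendsto_odd_of_tendsto_even {α : Type*} {f : ℕ → α} {l : Filter α}
    (hodd : Tendsto (fun k => f (2 * k + 1)) atTop l)
    (heven : Tendsto (fun k => f (2 * k + 2)) atTop l) : Tendsto f atTop l := by
  rw [tendsto_atTop'] at *
  intro s hs
  obtain ⟨N₁, hN₁⟩ := hodd s hs
  obtain ⟨N₂, hN₂⟩ := heven s hs
  refine ⟨2 * (N₁ + N₂) + 1, fun m hm => ?_⟩
  obtain ⟨k, rfl | rfl⟩ := Nat.even_or_odd' m
  · obtain ⟨j, rfl⟩ : ∃ j, k = j + 1 := ⟨k - 1, by omega⟩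
    exact hN₂ j (by omega)
  · exact hN₁ k (by omega)

/-- The Lucas sequence `U_n(c, 1)`, i.e. `U_{n-1}(c/2)` for the Chebyshev polynomials `U`. -/
noncomputable def lucasU (c : ℝ) : ℕ → ℝ
  | 0 => 0
  | 1 => 1
  | k + 2 => c * lucasU c (k + 1) - lucasU c k

section LucasU

variable {c : ℝ}

@[simp] lemma lucasU_zero : lucasU c 0 = 0 := rfl

@[simp] lemma lucasU_one : lucasU c 1 = 1 := rfl

lemma lucasU_add_two (k : ℕ) : lucasU c (k + 2) = c * lucasU c (k + 1) - lucasU c k := rfl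

lemma lucasU_nonneg_and_add_one_le_succ (hc : 2 ≤ c) (k : ℕ) :
    0 ≤ lucasU c k ∧ lucasU c k + 1 ≤ lucasU c (k + 1) := by
  induction k with
  | zero => simp
  | succ k ih =>
    obtain ⟨h0, h1⟩ := ih
    have hnext : 0 ≤ lucasU c (k + 1) := by linarith
    refine ⟨hnext, ?_⟩
    rw [lucasU_add_two]
    nlinarith

lemma lucasU_succ_pos (hc : 2 ≤ c) (k : ℕ) : 0 < lucasU c (k + 1) := by
  linarith [lucasU_nonneg_and_add_one_le_succ hc k]

theorem tendsto_lucasU_div_succ {l : ℝ} (hl : 1 ≤ l) (hlc : l + l⁻¹ = c) :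
    Tendsto (fun k => lucasU c k / lucasU c (k + 1)) atTop (𝓝 l⁻¹) := by
  have hc : 2 ≤ c := by
    have := strictMonoOn_add_inv.monotoneOn (Set.mem_Ici.2 le_rfl) (Set.mem_Ici.2 hl) hl
    norm_num at this
    linarith
  have hρ : Tendsto (fun k => lucasU c (k + 2) / lucasU c (k + 1)) atTop (𝓝 l) := by
    refine tendsto_of_succ_eq_sub_inv hl hlc (fun k => ?_) ?_
    · have := (lucasU_succ_pos hc (k + 1)).ne'
      rw [inv_div, lucasU_add_two (k + 1)]
      field_simp
    · have := inv_nonneg.2 (zero_le_one.trans hl)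
      simp only [lucasU_add_two, zero_add, lucasU_one, lucasU_zero]
      linarith
  refine (tendsto_add_atTop_iff_nat 1).1 ?_
  simpa only [inv_div] using hρ.inv₀ (by positivity)

end LucasU

theorem alternating_recurrence_eq_lucasU {a b : ℝ} {g : ℕ → ℝ × ℝ}
    (h1 : g 1 = (b, -1)) (h2 : g 2 = (a * b - 1, -a))
    (hodd : ∀ m, 1 ≤ m → Odd m → g (m + 2) = -g m + b • g (m + 1))
    (heven : ∀ m, 1 ≤ m → Even m → g (m + 2) = -g m + a • g (m + 1)) (k : ℕ) :
    g (2 * k + 1) = (b * lucasU (a * b - 2) (k + 1),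
      -(lucasU (a * b - 2) (k + 1) + lucasU (a * b - 2) k)) ∧
    g (2 * k + 2) = ((a * b - 1) * lucasU (a * b - 2) (k + 1) - lucasU (a * b - 2) k,
      -(a * lucasU (a * b - 2) (k + 1))) := by
  induction k with
  | zero => simp [h1, h2]
  | succ k ih =>
    obtain ⟨hO, hE⟩ := ih
    have hO' : g (2 * (k + 1) + 1) = -g (2 * k + 1) + b • g (2 * k + 2) :=
      hodd (2 * k + 1) (by omega) (odd_two_mul_add_one k)
    have hE' : g (2 * (k + 1) + 2) = -g (2 * k + 2) + a • g (2 * (k + 1) + 1) :=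
      heven (2 * k + 2) (by omega) ⟨k + 1, by ring⟩
    have hnext : g (2 * (k + 1) + 1) = (b * lucasU (a * b - 2) (k + 2),
        -(lucasU (a * b - 2) (k + 2) + lucasU (a * b - 2) (k + 1))) := by
      rw [hO', hO, hE, lucasU_add_two]
      ext <;> simp <;> ring
    refine ⟨hnext, ?_⟩
    rw [hE', hnext, hE, lucasU_add_two]
    ext <;> simp <;> ring

theorem tendsto_slope_of_alternating_recurrence {a b l : ℝ} {g : ℕ → ℝ × ℝ} (hab : 4 ≤ a * b)
    (hl : 1 ≤ l) (hlc : l + l⁻¹ = a * b - 2)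
    (h1 : g 1 = (b, -1)) (h2 : g 2 = (a * b - 1, -a))
    (hodd : ∀ m, 1 ≤ m → Odd m → g (m + 2) = -g m + b • g (m + 1))
    (heven : ∀ m, 1 ≤ m → Even m → g (m + 2) = -g m + a • g (m + 1)) :
    Tendsto (fun m => (g m).2 / (g m).1) atTop (𝓝 (-((1 + l⁻¹) / b))) := by
  have hc : 2 ≤ a * b - 2 := by linarith
  have hb : b ≠ 0 := right_ne_zero_of_mul (show 0 < a * b by linarith).ne'
  have hl0 : 0 < l := by linarith
  have hratio := tendsto_lucasU_div_succ hl hlc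
  have hform := alternating_recurrence_eq_lucasU h1 h2 hodd heven
  set u := lucasU (a * b - 2)
  have hu (k : ℕ) : u (k + 1) ≠ 0 := (lucasU_succ_pos hc k).ne'
  apply tendsto_of_tendsto_odd_of_tendsto_even
  · have hodd_slope : (fun k => (g (2 * k + 1)).2 / (g (2 * k + 1)).1)
        = fun k => -((1 + u k / u (k + 1)) / b) := funext fun k => by
      rw [(hform k).1]
      field_simp [hu k]
    rw [hodd_slope]
    exact ((tendsto_const_nhds.add hratio).div_const b).neg
  · have heven_slope : (fun k => (g (2 * k + 2)).2 / (g (2 * k + 2)).1)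
        = fun k => -(a / (a * b - 1 - u k / u (k + 1))) := funext fun k => by
      have : a * b - 1 - u k / u (k + 1) = ((a * b - 1) * u (k + 1) - u k) / u (k + 1) := by
        field_simp [hu k]
      rw [(hform k).2, this, div_div_eq_mul_div]
      exact neg_div _ _
    have hlimit : a * b - 1 - l⁻¹ = 1 + l := by linarith
    have hvalue : a / (a * b - 1 - l⁻¹) = (1 + l⁻¹) / b := by
      rw [hlimit, div_eq_div_iff (by positivity) hb]
      linear_combination -hlc - inv_mul_cancel₀ hl0.ne'
    rw [heven_slope, ← hvalue]
    exact (tendsto_const_nhds.div (tendsto_const_nhds.sub hratio)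
      (by rw [hlimit]; positivity)).neg

lemma sub_sqrt_div_eq_div_add_sqrt {a b : ℝ} (hab : 4 ≤ a * b) :
    (a * b - √(a * b * (a * b - 4))) / (2 * b) = 2 * a / (a * b + √(a * b * (a * b - 4))) := by
  have hb : b ≠ 0 := right_ne_zero_of_mul (show 0 < a * b by linarith).ne'
  have hsq := Real.sq_sqrt (show 0 ≤ a * b * (a * b - 4) by nlinarith)
  have hpos : 0 < a * b + √(a * b * (a * b - 4)) := by positivity
  rw [div_eq_div_iff (by positivity) hpos.ne']
  linear_combination -hsq

theorem stmt_8_general (a b : ℤ) (hab : 4 ≤ a * b)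
    (g' : ℕ → ℝ × ℝ)
    (h1 : g' 1 = ((b : ℝ), -1)) (h2 : g' 2 = ((a : ℝ) * b - 1, -(a : ℝ)))
    (hodd : ∀ m, 1 ≤ m → Odd m → g' (m + 2) = -g' m + (b : ℝ) • g' (m + 1))
    (heven : ∀ m, 1 ≤ m → Even m → g' (m + 2) = -g' m + (a : ℝ) • g' (m + 1)) :
    Filter.Tendsto (fun m : ℕ => (g' m).2 / (g' m).1) Filter.atTop
      (nhds (-(((a : ℝ) * b - Real.sqrt ((a * b) * (a * b - 4))) / (2 * b)))) ∧
    -(((a : ℝ) * b - Real.sqrt ((a * b) * (a * b - 4))) / (2 * b)) =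
      -(2 * (a : ℝ) / ((a : ℝ) * b + Real.sqrt ((a * b) * (a * b - 4)))) := by
  have hab' : (4 : ℝ) ≤ a * b := by exact_mod_cast hab
  refine ⟨?_, by rw [sub_sqrt_div_eq_div_add_sqrt hab']⟩
  set s := √((a : ℝ) * b * (a * b - 4))
  have hs : s ^ 2 = a * b * (a * b - 4) := Real.sq_sqrt (by nlinarith)
  have hs0 : 0 ≤ s := Real.sqrt_nonneg _
  -- the roots of `x ^ 2 - (a b - 2) x + 1`
  have hinv : ((a * b - 2 + s) / 2)⁻¹ = (a * b - 2 - s) / 2 :=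
    inv_eq_of_mul_eq_one_right (by linear_combination -hs / 4)
  have hl : 1 ≤ (a * b - 2 + s) / 2 := by linarith
  convert tendsto_slope_of_alternating_recurrence hab' hl (by rw [hinv]; ring)
    h1 h2 hodd heven using 3
  rw [hinv]
  ring

theorem stmt_8 (a b : ℤ) (ha : 0 < a) (hb : 0 < b) (hab : 4 ≤ a * b)
    (g' : ℕ → ℝ × ℝ)
    (h1 : g' 1 = ((b : ℝ), -1)) (h2 : g' 2 = ((a : ℝ) * b - 1, -(a : ℝ)))
    (hodd : ∀ m, 1 ≤ m → Odd m → g' (m + 2) = -g' m + (b : ℝ) • g' (m + 1))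
    (heven : ∀ m, 1 ≤ m → Even m → g' (m + 2) = -g' m + (a : ℝ) • g' (m + 1)) :
    Filter.Tendsto (fun m : ℕ => (g' m).2 / (g' m).1) Filter.atTop
      (nhds (-(((a : ℝ) * b - Real.sqrt ((a * b) * (a * b - 4))) / (2 * b)))) ∧
    -(((a : ℝ) * b - Real.sqrt ((a * b) * (a * b - 4))) / (2 * b)) =
      -(2 * (a : ℝ) / ((a : ℝ) * b + Real.sqrt ((a * b) * (a * b - 4)))) :=
  stmt_8_general a b hab g' h1 h2 hodd heven
end

section
/- Let a, b be positive integers with ab ≥ 4, and let c₀ < 0, d₀ > 0 be integers. Then -d₀/c₀ < (ab - √(ab(ab-4)))/(2a) if and only if both ab·c₀·d₀ + a·d₀² + b·c₀² > 0 and 2d₀ + b·c₀ < 0 hold. -/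
/-!
The right-hand side is the smaller root of `a x² - a b x + b`. A point lies strictly left of the
smaller root of an upward parabola iff the parabola is positive there and the point lies left of
the vertex `b / 2`; at `x = -d₀ / c₀`, clearing the denominator turns these into the two integer
conditions.
-/

theorem Real.sqrt_lt_iff {x y : ℝ} : √x < y ↔ 0 < y ∧ x < y ^ 2 :=
  ⟨fun h ↦ have hy := (Real.sqrt_nonneg x).trans_lt h; ⟨hy, (Real.sqrt_lt' hy).1 h⟩,
    fun ⟨hy, h⟩ ↦ (Real.sqrt_lt' hy).2 h⟩

-- For a negative discriminant `√` returns `0`, and both sides reduce to `2 * α * x + β < 0`.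
theorem lt_smaller_root_iff {α β γ x : ℝ} (hα : 0 < α) :
    x < (-β - √(discrim α β γ)) / (2 * α) ↔
      0 < α * (x * x) + β * x + γ ∧ 2 * α * x + β < 0 := by
  have hsq : (2 * α * x + β) ^ 2 - discrim α β γ = 4 * α * (α * (x * x) + β * x + γ) := by
    rw [discrim]; ring
  have hlin : x < (-β - √(discrim α β γ)) / (2 * α) ↔ √(discrim α β γ) < -(2 * α * x + β) := by
    rw [lt_div_iff₀ (by positivity)]; constructor <;> intro h <;> linarith
  rw [hlin, Real.sqrt_lt_iff, neg_sq, ← sub_pos (b := discrim α β γ), hsq,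
    mul_pos_iff_of_pos_left (by positivity), neg_pos, and_comm]

theorem stmt_11_general (a b c₀ d₀ : ℤ) (ha : 0 < a) (hc : c₀ < 0) :
    -(d₀ : ℝ) / c₀ < ((a : ℝ) * b - Real.sqrt ((a * b) * (a * b - 4))) / (2 * a) ↔
    (0 < a * b * c₀ * d₀ + a * d₀ ^ 2 + b * c₀ ^ 2 ∧ 2 * d₀ + b * c₀ < 0) := by
  have ha' : (0 : ℝ) < a := by exact_mod_cast ha
  have hc' : (c₀ : ℝ) < 0 := by exact_mod_cast hc
  have hc0 : (c₀ : ℝ) ≠ 0 := hc'.ne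
  have hroot : ((a : ℝ) * b - √((a * b) * (a * b - 4))) / (2 * a) =
      (-(-(a * b)) - √(discrim (a : ℝ) (-(a * b)) b)) / (2 * a) := by
    rw [discrim]; ring_nf
  have hvalue : (a : ℝ) * (-d₀ / c₀ * (-d₀ / c₀)) + -(a * b) * (-d₀ / c₀) + b =
      (a * b * c₀ * d₀ + a * d₀ ^ 2 + b * c₀ ^ 2) / c₀ ^ 2 := by
    field_simp; ring
  have hslope : 2 * (a : ℝ) * (-d₀ / c₀) + -(a * b) = (2 * d₀ + b * c₀) / (-c₀ / a) := by
    field_simp; ring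
  rw [hroot, lt_smaller_root_iff ha', hvalue, hslope, div_pos_iff_of_pos_right (sq_pos_of_neg hc'),
    div_lt_iff₀ (div_pos (neg_pos.2 hc') ha'), zero_mul]
  norm_cast

theorem stmt_11 (a b c₀ d₀ : ℤ) (ha : 0 < a) (hb : 0 < b) (hab : 4 ≤ a * b)
    (hc : c₀ < 0) (hd : 0 < d₀) :
    -(d₀ : ℝ) / c₀ < ((a : ℝ) * b - Real.sqrt ((a * b) * (a * b - 4))) / (2 * a) ↔
    (0 < a * b * c₀ * d₀ + a * d₀ ^ 2 + b * c₀ ^ 2 ∧ 2 * d₀ + b * c₀ < 0) :=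
  stmt_11_general a b c₀ d₀ ha hc
end
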